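/- arXiv:1409.0141 — 5 statements merged into one kernel-verified Lean document; each statement's English description precedes it below -/
import Mathlib

section
/- Let X be a separable real Banach space and C ⊆ S_X a non-empty closed convex subset of the unit sphere such that the setwise stabiliser {T ∈ Isom(X) : T[C] = C} acts transitively on C. Then C consists of a single point. -/
/-!
A separable closed bounded convex set `C` contains a point `c₀`, a weighted average of a dense
sequence, at which every functional attaining its minimum on `C` is constant on `C`. Transitivity
of the stabiliser moves every point of `C` to `c₀`, so every functional attaining its minimum on
`C` is constant on `C`. But if `y ≠ z` lie in `C`, Ekeland's principle for a functional norming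
`y - z`, followed by separating `C` from a cone (the Bishop–Phelps argument), produces a
functional attaining its minimum on `C` and separating `y` from `z`.
-/

open Filter Topology Set Bornology TopologicalSpace

theorem exists_forall_le_add_mul_dist {α : Type*} [MetricSpace α] [CompleteSpace α] [Nonempty α]
    {f : α → ℝ} (hf : Continuous f) (hbdd : BddAbove (range f)) {ε : ℝ} (hε : 0 < ε) :
    ∃ w, ∀ c, f c ≤ f w + ε * dist c w := by
  -- `S x` consists of the points beating `x` by `ε` times their distance; nearly maximising `f`
  -- on `S xₙ` at each step makes the nested sets `S xₙ` shrink to a point `w` with `S w = {w}`.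
  set S : α → Set α := fun x => {c | f x + ε * dist c x ≤ f c}
  have mem_self (x : α) : x ∈ S x := by simp [S]
  have subset_of_mem {x c : α} (hc : c ∈ S x) : S c ⊆ S x := by
    intro b hb
    simp only [S, mem_ofPred_eq] at hc hb ⊢
    nlinarith [dist_triangle b c x]
  have isClosed (x : α) : IsClosed (S x) := isClosed_le (by fun_prop) hf
  have shrink (x : α) {δ : ℝ} (hδ : 0 < δ) : ∃ c ∈ S x, ∀ b ∈ S c, dist b c < δ := by
    obtain ⟨_, ⟨c, hc, rfl⟩, hlt⟩ := exists_lt_of_lt_csSup ((nonempty_of_mem (mem_self x)).image f)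
      (sub_lt_self (sSup (f '' S x)) (mul_pos hε hδ))
    refine ⟨c, hc, fun b hb => lt_of_mul_lt_mul_left ?_ hε.le⟩
    have : f b ≤ sSup (f '' S x) :=
      le_csSup (hbdd.mono (image_subset_range _ _)) ⟨b, subset_of_mem hc hb, rfl⟩
    have : f c + ε * dist b c ≤ f b := hb
    linarith
  choose g hgS hg using shrink
  let x : ℕ → α := fun n => Nat.rec (Classical.arbitrary α)
    (fun n xn => g xn (Nat.one_div_pos_of_nat (n := n))) n
  have hanti : Antitone fun n => S (x n) :=
    antitone_nat_of_succ_le fun n => subset_of_mem (hgS _ _)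
  have hsmall {η : ℝ} (hη : 0 < η) : ∃ n, ∀ b ∈ S (x n), ∀ b' ∈ S (x n), dist b b' < η := by
    obtain ⟨n, hn⟩ := exists_nat_one_div_lt (half_pos hη)
    refine ⟨n + 1, fun b hb b' hb' => ?_⟩
    have := hg (x n) Nat.one_div_pos_of_nat b hb
    have := hg (x n) Nat.one_div_pos_of_nat b' hb'
    linarith [dist_triangle_right b b' (x (n + 1))]
  have hcauchy : CauchySeq x := by
    refine Metric.cauchySeq_iff.2 fun η hη => ?_
    obtain ⟨N, hN⟩ := hsmall hη
    exact ⟨N, fun m hm n hn => hN _ (hanti hm (mem_self _)) _ (hanti hn (mem_self _))⟩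
  obtain ⟨w, hw⟩ := cauchySeq_tendsto_of_complete hcauchy
  have hwS (n : ℕ) : w ∈ S (x n) :=
    (isClosed _).mem_of_tendsto hw (eventually_atTop.2 ⟨n, fun m hm => hanti hm (mem_self _)⟩)
  refine ⟨w, fun c => le_of_not_gt fun hc => ?_⟩
  have hcw : c = w := eq_of_forall_dist_le fun η hη => by
    obtain ⟨n, hn⟩ := hsmall hη
    exact (hn c (subset_of_mem (hwS n) hc.le) w (hwS n)).le
  subst hcw
  simp at hc

theorem exists_isMinOn_lt_zero {X : Type*} [NormedAddCommGroup X] [NormedSpace ℝ X] {C : Set X}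
    (hC : Convex ℝ C) {w : X} (hw : w ∈ C) (ψ : StrongDual ℝ X) {ε : ℝ} (hε : 0 ≤ ε)
    (hψ : ∀ c ∈ C, ψ c ≤ ψ w + ε * ‖c - w‖) {v : X} (hv : ε * ‖v‖ < ψ v) :
    ∃ f : StrongDual ℝ X, IsMinOn f C w ∧ f v < 0 := by
  set K : Set X := {u | ε * ‖u‖ < ψ u}
  have hKconv : Convex ℝ K := by
    have := ((ψ : X →ₗ[ℝ] ℝ).concaveOn convex_univ).sub ((convexOn_norm convex_univ).smul hε)
    simpa [K, sub_pos] using this.convex_gt 0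
  have hKopen : IsOpen K := isOpen_lt (by fun_prop) ψ.continuous
  have hK_smul {t : ℝ} (ht : 0 < t) : t • v ∈ K := by
    simp only [K, mem_ofPred_eq, norm_smul, map_smul, smul_eq_mul, Real.norm_of_nonneg ht.le]
    nlinarith
  -- separate the cone `w + K` of directions in which `ψ` grows faster than `ε‖·‖` from `C`
  obtain ⟨f, r, hfK, hfC⟩ := geometric_hahn_banach_open (hKconv.translate_preimage_left (-w))
    (hKopen.preimage (continuous_add_const _)) hC (by
      refine disjoint_left.2 fun c hcK hc => ?_
      have : ε * ‖c - w‖ < ψ (c - w) := by rw [sub_eq_add_neg]; exact hcK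
      linarith [map_sub ψ c w, hψ c hc])
  have hf_smul {t : ℝ} (ht : 0 < t) : f w + t * f v < r := by
    simpa using hfK (w + t • v) (by simpa using hK_smul ht)
  have hfv : f v < 0 := by linarith [hf_smul one_pos, hfC w hw]
  have hfw : f w ≤ r := le_of_not_gt fun hr => by
    have := hf_smul (div_pos (sub_pos.2 hr) (neg_pos.2 hfv))
    rw [div_mul_eq_mul_div, div_neg, mul_div_cancel_right₀ _ hfv.ne] at this
    linarith
  exact ⟨f, fun c hc => hfw.trans (hfC c hc), hfv⟩

theorem Convex.mem_of_hasSum {ι E : Type*} [AddCommGroup E] [Module ℝ E] [TopologicalSpace E]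
    [ContinuousSMul ℝ E] {s : Set E} (hs : Convex ℝ s) (hsc : IsClosed s) {w : ι → ℝ}
    {z : ι → E} {x : E} (hw₀ : ∀ i, 0 ≤ w i) (hw₁ : HasSum w 1) (hz : ∀ i, z i ∈ s)
    (hx : HasSum (fun i => w i • z i) x) : x ∈ s := by
  have hcm : Tendsto (fun t : Finset ι => t.centerMass w z) atTop (𝓝 x) := by
    simpa [Finset.centerMass] using (Tendsto.inv₀ hw₁ one_ne_zero).smul hx
  refine hsc.mem_of_tendsto hcm ?_
  filter_upwards [Tendsto.eventually_const_lt zero_lt_one hw₁] with t ht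
  exact hs.centerMass_mem (fun i _ => hw₀ i) ht (fun i _ => hz i)

theorem exists_mem_forall_isMinOn_eq {X : Type*} [NormedAddCommGroup X] [NormedSpace ℝ X]
    [CompleteSpace X] {C : Set X} (hsep : IsSeparable C) (hne : C.Nonempty) (hclosed : IsClosed C)
    (hconv : Convex ℝ C) (hbdd : IsBounded C) :
    ∃ c₀ ∈ C, ∀ f : StrongDual ℝ X, IsMinOn f C c₀ → ∀ c ∈ C, f c = f c₀ := by
  obtain ⟨t, htC, htc, hCt⟩ := hsep.exists_countable_dense_subset
  obtain ⟨u, rfl⟩ := htc.exists_eq_range (closure_nonempty_iff.1 (hne.mono hCt))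
  obtain ⟨R, hR⟩ := hbdd.exists_norm_le
  set a : ℕ → ℝ := fun n => 1 / 2 / 2 ^ n
  have ha : HasSum a 1 := hasSum_geometric_two' 1
  have ha_pos : ∀ n, 0 < a n := fun n => by positivity
  obtain ⟨c₀, hc₀⟩ : Summable fun n => a n • u n :=
    (ha.summable.mul_right R).of_norm_bounded fun n => by
      rw [norm_smul, Real.norm_of_nonneg (ha_pos n).le]
      exact mul_le_mul_of_nonneg_left (hR _ (htC ⟨n, rfl⟩)) (ha_pos n).le
  refine ⟨c₀, hconv.mem_of_hasSum hclosed (fun n => (ha_pos n).le) ha (fun n => htC ⟨n, rfl⟩) hc₀,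
    fun f hmin => ?_⟩
  -- `f c₀` is the `a`-weighted average of the values `f (u n) ≥ f c₀`, so they all equal `f c₀`.
  have hsum : HasSum (fun n => a n * (f (u n) - f c₀)) 0 := by
    simpa [mul_sub] using (hc₀.mapL f).sub (ha.mul_right (f c₀))
  have hzero := (hasSum_zero_iff_of_nonneg fun n =>
    mul_nonneg (ha_pos n).le (sub_nonneg.2 (hmin (htC ⟨n, rfl⟩)))).1 hsum
  have hu : EqOn f (fun _ => f c₀) (range u) := by
    rintro _ ⟨n, rfl⟩
    simpa [(ha_pos n).ne', sub_eq_zero] using congrFun hzero n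
  exact fun c hc => hu.closure f.continuous continuous_const (hCt hc)

theorem subsingleton_of_forall_isMinOn_eq {X : Type*} [NormedAddCommGroup X] [NormedSpace ℝ X]
    [CompleteSpace X] {C : Set X} (hclosed : IsClosed C) (hconv : Convex ℝ C)
    (hbdd : IsBounded C)
    (h : ∀ w ∈ C, ∀ f : StrongDual ℝ X, IsMinOn f C w → ∀ c ∈ C, f c = f w) :
    C.Subsingleton := by
  intro y hy z hz
  by_contra hyz
  obtain ⟨ψ, -, hψ⟩ := exists_dual_vector ℝ (y - z) (norm_ne_zero_iff.2 (sub_ne_zero.2 hyz))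
  have : CompleteSpace C := hclosed.completeSpace_coe
  have : Nonempty C := ⟨⟨y, hy⟩⟩
  obtain ⟨⟨w, hw⟩, hwmax⟩ := exists_forall_le_add_mul_dist (f := fun c : C => ψ c) (by fun_prop)
    ((ψ.lipschitz.isBounded_image hbdd).bddAbove.mono
      (range_subset_iff.2 fun c => mem_image_of_mem ψ c.2))
    one_half_pos
  obtain ⟨f, hmin, hf⟩ := exists_isMinOn_lt_zero hconv hw ψ one_half_pos.le
    (fun c hc => by simpa [Subtype.dist_eq, dist_eq_norm] using hwmax ⟨c, hc⟩) (v := y - z)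
    (by
      simp only [hψ, RCLike.ofReal_real_eq_id, id]
      linarith [norm_pos_iff.2 (sub_ne_zero.2 hyz)])
  rw [map_sub, h w hw f hmin y hy, h w hw f hmin z hz, sub_self] at hf
  exact hf.false

/-- Let `X` be a separable real Banach space and `C ⊆ S_X` a non-empty closed convex
subset of the unit sphere such that the setwise stabiliser of `C` in the group of
surjective linear isometries of `X` acts transitively on `C`.  Then `C` is a singleton. -/
theorem singleton_of_transitive_stabiliser
    {X : Type*} [NormedAddCommGroup X] [NormedSpace ℝ X] [CompleteSpace X]
    [TopologicalSpace.SeparableSpace X]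
    (C : Set X) (hne : C.Nonempty) (hclosed : IsClosed C) (hconv : Convex ℝ C)
    (hsphere : C ⊆ Metric.sphere (0 : X) 1)
    (htrans : ∀ y ∈ C, ∀ z ∈ C, ∃ T : X ≃ₗᵢ[ℝ] X, T '' C = C ∧ T y = z) :
    ∃ x : X, C = {x} := by
  have hbdd : IsBounded C := Metric.isBounded_sphere.subset hsphere
  obtain ⟨c₀, hc₀, hc₀_gen⟩ :=
    exists_mem_forall_isMinOn_eq (.of_separableSpace C) hne hclosed hconv hbdd
  refine (subsingleton_of_forall_isMinOn_eq hclosed hconv hbdd fun w hw f hmin c hc => ?_)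
    |>.eq_empty_or_singleton.resolve_left hne.ne_empty
  obtain ⟨T, hTC, rfl⟩ := htrans w hw c₀ hc₀
  have hT (x : X) : T x ∈ C ↔ x ∈ C := by
    simpa only [hTC] using T.injective.mem_set_image (s := C) (a := x)
  have hT_symm (x : X) : T.symm x ∈ C ↔ x ∈ C := by simpa using (hT (T.symm x)).symm
  -- `f ∘ T⁻¹` attains its minimum on `C` at `c₀ = T w`
  have := hc₀_gen (f.comp (T.symm : X →L[ℝ] X))
    (fun x hx => by simpa using hmin ((hT_symm x).2 hx)) (T c) ((hT c).2 hc)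
  simpa using this
end

section
/- Let (X, ‖·‖) be a separable real Banach space whose linear isometry group acts transitively on the unit sphere. Then the norm is Gâteaux differentiable; equivalently, every point x of the unit sphere has a unique support functional, i.e., a unique φ ∈ X* with ‖φ‖ = 1 and φ(x) = 1. -/
/-!
Mazur: for a direction `h` and a size `c > 0`, the points where the norm has a corner of size `c`
in direction `h` form a closed set with empty interior, because along a line the norm is
Lipschitz and so cannot have corners of a fixed size at every point of an interval. By Baire,
the points outside countably many such sets (directions from a dense sequence, sizes `1/(n+1)`)
are dense, and at such a point two support functionals agree on every direction of the sequence,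
hence coincide. Normalise one such nonzero point and move it onto any unit vector by a linear
isometry.
-/

open Set Topology
open scoped NNReal

/-- The slopes `(f ((i + 1) * δ) - f (i * δ)) / δ` grow by at least `c` per step but stay in
`[-K, K]`. -/
theorem LipschitzWith.mul_le_of_le_secondDiff {f : ℝ → ℝ} {K : ℝ≥0} (hf : LipschitzWith K f)
    {δ c : ℝ} (hδ : 0 < δ) {m : ℕ}
    (hdiff : ∀ i < m, c * δ ≤ f ((i + 1) * δ + δ) + f ((i + 1) * δ - δ) - 2 * f ((i + 1) * δ)) :
    m * c ≤ 2 * K := by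
  set g : ℕ → ℝ := fun i => f ((i + 1) * δ) - f (i * δ)
  have hg : ∀ i, |g i| ≤ K * δ := fun i => by
    simpa [g, ← Real.dist_eq, Real.dist_eq (_ * δ), ← sub_mul, abs_of_pos hδ] using
      hf.dist_le_mul ((i + 1) * δ) (i * δ)
  have hsum : m * c * δ ≤ g m - g 0 := by
    rw [← Finset.sum_range_sub]
    calc m * c * δ = ∑ i ∈ Finset.range m, c * δ := by simp [mul_assoc]
      _ ≤ _ := Finset.sum_le_sum fun i hi => (hdiff i (Finset.mem_range.1 hi)).trans_eq <| by
        simp only [g]; push_cast; ring_nf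
  refine le_of_mul_le_mul_right ?_ hδ
  calc m * c * δ ≤ g m - g 0 := hsum
    _ ≤ 2 * K * δ := by linarith [abs_le.1 (hg m), abs_le.1 (hg 0)]

section

variable {X : Type*} [NormedAddCommGroup X] [NormedSpace ℝ X]

/-- The norm is Gâteaux differentiable at `x` in direction `h` iff `x ∉ cornerSet h c` for every
`c > 0`: by convexity, the symmetric second difference divided by `δ` decreases to the jump of the
one-sided derivatives as `δ → 0⁺`. -/
def cornerSet (h : X) (c : ℝ) : Set X :=
  {x | ∀ δ > 0, c * δ ≤ ‖x + δ • h‖ + ‖x - δ • h‖ - 2 * ‖x‖}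

theorem isClosed_cornerSet (h : X) (c : ℝ) : IsClosed (cornerSet h c) := by
  simp only [cornerSet, ofPred_forall]
  exact isClosed_iInter fun δ => isClosed_iInter fun _ =>
    isClosed_le continuous_const (by fun_prop)

theorem dense_compl_cornerSet (h : X) {c : ℝ} (hc : 0 < c) : Dense (cornerSet h c)ᶜ := by
  rw [← interior_eq_empty_iff_dense_compl, eq_empty_iff_forall_notMem]
  intro x hx
  have hline : ∀ᶠ t : ℝ in 𝓝 0, x + t • h ∈ cornerSet h c :=
    (show Continuous fun t : ℝ => x + t • h by fun_prop).continuousAt.preimage_mem_nhds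
      (by simpa using mem_interior_iff_mem_nhds.1 hx)
  obtain ⟨ε, hε, hball⟩ := Metric.eventually_nhds_iff.1 hline
  obtain ⟨m, hm⟩ := exists_nat_gt (2 * ‖h‖ / c)
  have hδ : 0 < ε / (m + 1) := by positivity
  have hlip : LipschitzWith ‖h‖₊ fun t : ℝ => ‖x + t • h‖ :=
    LipschitzWith.of_dist_le_mul fun s t => by
      simpa [Real.dist_eq, ← sub_smul, norm_smul, mul_comm] using
        abs_norm_sub_norm_le (x + s • h) (x + t • h)
  have hmc := hlip.mul_le_of_le_secondDiff hδ (m := m) fun i hi => by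
    have hi' : ((i : ℝ) + 1) * (ε / (m + 1)) < ε := by
      rw [mul_div_assoc', div_lt_iff₀ (by positivity)]
      have : (i : ℝ) + 1 ≤ m := by exact_mod_cast hi
      nlinarith
    have hmem := hball (y := (i + 1) * (ε / (m + 1))) (by
      rw [Real.dist_0_eq_abs, abs_of_pos (by positivity)]; exact hi') _ hδ
    simpa only [add_smul, sub_smul, ← add_assoc, ← add_sub_assoc] using hmem
  rw [div_lt_iff₀ hc] at hm
  simp only [coe_nnnorm] at hmc
  linarith

def supportFunctionals (x : X) : Set (X →L[ℝ] ℝ) := {φ | ‖φ‖ ≤ 1 ∧ φ x = ‖x‖}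

theorem sub_mul_le_of_mem_supportFunctionals {x : X} {φ ψ : X →L[ℝ] ℝ}
    (hφ : φ ∈ supportFunctionals x) (hψ : ψ ∈ supportFunctionals x) (h : X) (δ : ℝ) :
    (φ h - ψ h) * δ ≤ ‖x + δ • h‖ + ‖x - δ • h‖ - 2 * ‖x‖ := by
  have hle : ∀ χ ∈ supportFunctionals x, ∀ y, χ y ≤ ‖y‖ := fun χ hχ y =>
    (le_abs_self _).trans <| (χ.le_of_opNorm_le hχ.1 y).trans_eq (one_mul _)
  have h₁ := hle φ hφ (x + δ • h)
  have h₂ := hle ψ hψ (x - δ • h)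
  rw [map_add, map_smul, hφ.2, smul_eq_mul] at h₁
  rw [map_sub, map_smul, hψ.2, smul_eq_mul] at h₂
  linarith

theorem subsingleton_supportFunctionals {u : ℕ → X} (hu : DenseRange u) {x : X}
    (hx : ∀ k n : ℕ, x ∉ cornerSet (u k) (1 / (n + 1))) :
    (supportFunctionals x).Subsingleton := by
  have hle : ∀ φ ∈ supportFunctionals x, ∀ ψ ∈ supportFunctionals x, ∀ k, φ (u k) ≤ ψ (u k) := by
    intro φ hφ ψ hψ k
    refine sub_nonpos.1 <| ge_of_tendsto' tendsto_one_div_add_atTop_nhds_zero_nat fun n => ?_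
    obtain ⟨δ, hδ, hlt⟩ := not_forall₂.1 (hx k n)
    exact (lt_of_mul_lt_mul_right ((sub_mul_le_of_mem_supportFunctionals hφ hψ _ δ).trans_lt
      (not_le.1 hlt)) hδ.le).le
  exact fun φ hφ ψ hψ => DFunLike.coe_injective <| hu.equalizer φ.continuous ψ.continuous <|
    funext fun k => (hle φ hφ ψ hψ k).antisymm (hle ψ hψ φ hφ k)

theorem dense_setOf_subsingleton_supportFunctionals [CompleteSpace X]
    [TopologicalSpace.SeparableSpace X] :
    Dense {x : X | (supportFunctionals x).Subsingleton} := by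
  obtain ⟨u, hu⟩ := TopologicalSpace.exists_dense_seq X
  refine Dense.mono (fun x hx => subsingleton_supportFunctionals hu fun k n => ?_)
    (dense_iInter_of_isOpen (f := fun p : ℕ × ℕ => (cornerSet (u p.1) (1 / (p.2 + 1)))ᶜ)
      (fun p => (isClosed_cornerSet _ _).isOpen_compl)
      (fun p => dense_compl_cornerSet _ (by positivity)))
  exact mem_iInter.1 hx (k, n)

theorem supportFunctionals_smul {a : ℝ} (ha : 0 < a) (x : X) :
    supportFunctionals (a • x) = supportFunctionals x := by
  ext φ
  simp [supportFunctionals, norm_smul, abs_of_pos ha, ha.ne']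

theorem existsUnique_of_subsingleton_supportFunctionals {x : X} (hx : ‖x‖ = 1)
    (hsub : (supportFunctionals x).Subsingleton) : ∃! φ : X →L[ℝ] ℝ, ‖φ‖ = 1 ∧ φ x = 1 := by
  obtain ⟨g, hg, hgx⟩ := exists_dual_vector ℝ x (by simp [hx])
  refine ⟨g, ⟨hg, by simpa [hx] using hgx⟩, fun φ hφ => hsub ⟨hφ.1.le, ?_⟩ ⟨hg.le, hgx⟩⟩
  simpa [hx] using hφ.2

end

theorem LinearIsometryEquiv.existsUnique_norming_apply_iff {𝕜 E F : Type*}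
    [NontriviallyNormedField 𝕜] [NormedAddCommGroup E] [NormedSpace 𝕜 E]
    [NormedAddCommGroup F] [NormedSpace 𝕜 F] (T : E ≃ₗᵢ[𝕜] F) (x : E) :
    (∃! φ : F →L[𝕜] 𝕜, ‖φ‖ = 1 ∧ φ (T x) = 1) ↔ ∃! φ : E →L[𝕜] 𝕜, ‖φ‖ = 1 ∧ φ x = 1 := by
  refine ((T.toContinuousLinearEquiv.arrowCongr (.refl 𝕜 𝕜)).toEquiv.existsUnique_congr
    fun φ => ?_).symm
  have hφ : (T.toContinuousLinearEquiv.arrowCongr (.refl 𝕜 𝕜)).toEquiv φ =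
      φ.comp (T.symm : F →L[𝕜] E) := rfl
  rw [hφ, ContinuousLinearMap.opNorm_comp_linearIsometryEquiv]
  simp

/-- The norm of a separable real Banach space whose linear isometry group acts
transitively on the unit sphere is Gâteaux differentiable; equivalently, every point
of the unit sphere has a unique support functional. -/
theorem unique_support_functional_of_transitive
    {X : Type*} [NormedAddCommGroup X] [NormedSpace ℝ X] [CompleteSpace X]
    [TopologicalSpace.SeparableSpace X]
    (htrans : ∀ x y : X, ‖x‖ = 1 → ‖y‖ = 1 → ∃ T : X ≃ₗᵢ[ℝ] X, T x = y) :
    ∀ x : X, ‖x‖ = 1 → ∃! φ : X →L[ℝ] ℝ, ‖φ‖ = 1 ∧ φ x = 1 := by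
  intro y hy
  obtain ⟨z, hz, hz0⟩ := dense_setOf_subsingleton_supportFunctionals.exists_mem_open
    (isOpen_compl_singleton (x := 0)) ⟨y, by simp [← norm_ne_zero_iff, hy]⟩
  have hz₁ : ‖‖z‖⁻¹ • z‖ = 1 := norm_smul_inv_norm hz0
  obtain ⟨T, rfl⟩ := htrans _ y hz₁ hy
  rw [T.existsUnique_norming_apply_iff]
  refine existsUnique_of_subsingleton_supportFunctionals hz₁ ?_
  rwa [supportFunctionals_smul (by simpa using hz0)]
end

section
/- Let λ : Γ → U(H) be a unitary representation, d an associated derivation, and suppose K is a closed λ_d-invariant linear complement of H₁ := H ⊕ {0} in H ⊕ H. Then d is inner: if P is the bounded projection onto H₁ along K and L is the restriction of P to H₂ := {0} ⊕ H (viewed as a map H → H), then d(g) = λ(g)L − Lλ(g) for all g ∈ Γ. -/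
/-- Let `λ : Γ → U(H)` be a unitary representation, `d` an associated derivation, and
`K` a closed `λ_d`-invariant linear complement of `H₁ = H ⊕ {0}` in `H ⊕ H`.  If `P` is
the projection onto `H₁` along `K` and `L` is the restriction of `P` to
`H₂ = {0} ⊕ H` (viewed as a map `H → H`), then `d(g) = λ(g)L − Lλ(g)`,
i.e. `d` is inner. -/
theorem invariant_complement_implies_inner
    {Γ : Type*} [Group Γ] {H : Type*} [NormedAddCommGroup H]
    [InnerProductSpace ℂ H] [CompleteSpace H]
    (lam : Γ →* (H ≃ₗᵢ[ℂ] H)) (d : Γ → H →L[ℂ] H)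
    (hder : ∀ g f : Γ, ∀ x : H, d (g * f) x = lam g (d f x) + d g (lam f x))
    (K : Submodule ℂ (H × H)) (hKclosed : IsClosed (K : Set (H × H)))
    (hcompl : IsCompl (Submodule.prod (⊤ : Submodule ℂ H) (⊥ : Submodule ℂ H)) K)
    (hKinv : ∀ g : Γ, ∀ p ∈ K, ((lam g p.1 + d g p.2, lam g p.2) : H × H) ∈ K)
    (P : (H × H) →L[ℂ] (H × H))
    (hP1 : ∀ p ∈ Submodule.prod (⊤ : Submodule ℂ H) (⊥ : Submodule ℂ H), P p = p)
    (hP2 : ∀ p ∈ K, P p = 0) :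
    ∀ g : Γ, ∀ x : H, d g x = lam g ((P (0, x)).1) - (P (0, lam g x)).1 := by
  intro g x
  have hmem : ((0, x) : H × H) ∈ (Submodule.prod (⊤ : Submodule ℂ H) ⊥) ⊔ K := by
    rw [hcompl.sup_eq_top]; trivial
  obtain ⟨p, hp, k, hk, hpk⟩ := Submodule.mem_sup.mp hmem
  have hp2 : p.2 = 0 := hp.2
  have hPp : P (0, x) = p := by
    rw [← hpk, map_add, hP1 p hp, hP2 k hk, add_zero]
  have h1 : p.1 + k.1 = 0 := congrArg Prod.fst hpk
  have h2 : p.2 + k.2 = x := congrArg Prod.snd hpk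
  have hk1 : k.1 = -p.1 := eq_neg_of_add_eq_zero_right h1
  have hk2 : k.2 = x := by rw [← h2, hp2, zero_add]
  have hkinv := hKinv g k hk
  have hsum : ((lam g p.1, (0 : H)) : H × H) + (lam g k.1 + d g k.2, lam g k.2)
      = (d g x, lam g x) := by
    rw [hk1, hk2, map_neg]
    ext <;> simp
  have hPbig : P (d g x, lam g x) = (lam g p.1, (0 : H)) := by
    rw [← hsum, map_add, hP2 _ hkinv, add_zero, hP1]
    exact ⟨trivial, rfl⟩
  have hdiff : ((0, lam g x) : H × H) = (d g x, lam g x) - (d g x, 0) := by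
    ext <;> simp
  have hPd : P (d g x, (0 : H)) = (d g x, 0) := hP1 _ ⟨trivial, rfl⟩
  have hP0 : P (0, lam g x) = (lam g p.1, (0 : H)) - (d g x, 0) := by
    rw [hdiff, map_sub, hPbig, hPd]
  rw [hPp, hP0]
  simp
end

section
/- Let T be the Cayley graph of the free group F_∞ on countably many generators (the ℵ₀-regular tree) and λ : Aut(T) → U(ℓ₂(T)) the unitary representation λ(g)x = x(g⁻¹·). Then λ is irreducible: the only closed λ(Aut(T))-invariant subspaces of ℓ₂(T) are {0} and ℓ₂(T). -/
/-!
The orthogonal projection `P` onto a closed `λ(Aut T)`-invariant subspace commutes with every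
`λ(g)`, so `P δ₁` is fixed by the stabiliser of the vertex `1`. That stabiliser contains the
automorphisms induced by permutations of the generators, whose orbits off `1` are infinite; an
`ℓ²` vector is zero on any infinite set where it is constant, hence `P δ₁ = c δ₁`. Left
translations move `1` to any vertex `t`, so `P δ_t = c δ_t` for all `t`: if `c = 0` every `δ_t`
is orthogonal to the subspace, and otherwise every `δ_t` lies in it.
-/

open scoped ENNReal

noncomputable section

/-- The vertex set of the `ℵ₀`-regular tree, realised as the free group `F_∞`. -/
abbrev V : Type := FreeGroup ℕ

/-- The Cayley graph of `F_∞` with respect to its free generating set: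
the `ℵ₀`-regular tree `T`. -/
def treeGraph : SimpleGraph V :=
  SimpleGraph.fromRel (fun s t => ∃ i : ℕ, t = s * FreeGroup.of i)

/-- The automorphism group `Aut(T)` of the `ℵ₀`-regular tree. -/
abbrev TreeAut := treeGraph ≃g treeGraph

/-- `ℓ_p(T)`. -/
abbrev lpT (p : ℝ≥0∞) := lp (fun _ : V => ℂ) p

lemma memℓp_comp {p : ℝ≥0∞} (g : V ≃ V) {x : V → ℂ} (h : Memℓp x p) :
    Memℓp (fun v => x (g v)) p := by
  rcases ENNReal.trichotomy p with rfl | rfl | hp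
  · rw [memℓp_zero_iff] at h ⊢
    exact Set.Finite.preimage g.injective.injOn h
  · rw [memℓp_infty_iff] at h ⊢
    apply h.mono
    rintro r ⟨v, rfl⟩
    exact ⟨g v, rfl⟩
  · apply memℓp_gen
    exact (g.summable_iff (f := fun v => ‖x v‖ ^ p.toReal)).2 ((memℓp_gen_iff hp).1 h)

/-- The shift representation of permutations of `T` on `ℂ^T`: `λ(g)x = x(g⁻¹ ·)`. -/
def lamFull (g : V ≃ V) : (V → ℂ) →ₗ[ℂ] (V → ℂ) where
  toFun x := fun v => x (g.symm v)
  map_add' _ _ := rfl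
  map_smul' _ _ := rfl

/-- The shift representation of permutations of `T` on `ℓ_p(T)`: `λ(g)x = x(g⁻¹ ·)`. -/
def lam (p : ℝ≥0∞) (g : V ≃ V) : lpT p →ₗ[ℂ] lpT p where
  toFun x := ⟨fun v => x (g.symm v), memℓp_comp g.symm (lp.memℓp x)⟩
  map_add' _ _ := rfl
  map_smul' _ _ := rfl

namespace FreeGroup

variable {α β : Type*}

theorem IsReduced.map [DecidableEq α] {f : α → β} (hf : Function.Injective f)
    {L : List (α × Bool)} (hL : IsReduced L) :
    IsReduced (L.map fun x => (f x.1, x.2)) :=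
  List.isChain_map_of_isChain _ (fun _ _ h hf' => h (hf hf')) hL

theorem toWord_map [DecidableEq α] [DecidableEq β] {f : α → β} (hf : Function.Injective f)
    (x : FreeGroup α) : (map f x).toWord = x.toWord.map fun p => (f p.1, p.2) := by
  conv_lhs => rw [← mk_toWord (x := x)]
  rw [map.mk, toWord_mk, (isReduced_toWord.map hf).reduce_eq]

theorem infinite_range_map_perm [Infinite α] {x : FreeGroup α} (hx : x ≠ 1) :
    (Set.range fun σ : Equiv.Perm α => map σ x).Infinite := by
  classical
  obtain ⟨⟨a, b⟩, L, hL⟩ := List.exists_cons_of_ne_nil (mt toWord_eq_nil_iff.1 hx)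
  -- `swap a k` turns the first letter `a` of the reduced word of `x` into `k`.
  refine Set.infinite_of_injective_forall_mem (f := fun k => map (Equiv.swap a k) x)
    (fun k l hkl => ?_) (fun k => ⟨_, rfl⟩)
  have := congrArg (fun y => y.toWord.head?) hkl
  simpa [toWord_map (Equiv.injective _), hL] using this

theorem map_mem_range_of_iff (σ : α ≃ β) {x : FreeGroup α} :
    map σ x ∈ Set.range of ↔ x ∈ Set.range of := by
  constructor
  · rintro ⟨b, hb⟩
    refine ⟨σ.symm b, ?_⟩
    simpa [map.comp] using congrArg (map σ.symm) hb
  · rintro ⟨a, rfl⟩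
    exact ⟨σ a, map.of.symm⟩

end FreeGroup

open scoped lp

theorem Memℓp.eq_zero_of_forall_eq_on_infinite {α E : Type*} [NormedAddCommGroup E] {p : ℝ≥0∞}
    (hp : 0 < p.toReal) {f : α → E} (hf : Memℓp f p) {s : Set α} (hs : s.Infinite) {c : E}
    (hfs : ∀ a ∈ s, f a = c) : c = 0 := by
  have : Infinite s := hs.to_subtype
  have hsum : Summable fun _ : s => ‖c‖ ^ p.toReal :=
    ((memℓp_gen_iff hp).1 hf).subtype s |>.congr fun a => by simp [hfs _ a.2]
  rw [summable_const_iff, Real.rpow_eq_zero (norm_nonneg c) hp.ne'] at hsum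
  exact norm_eq_zero.1 hsum

theorem lp.eq_bot_of_forall_single_mem_orthogonal {ι 𝕜 : Type*} [RCLike 𝕜] [DecidableEq ι]
    {K : Submodule 𝕜 ℓ²(ι, 𝕜)} (h : ∀ i, lp.single 2 i (1 : 𝕜) ∈ Kᗮ) : K = ⊥ := by
  refine (Submodule.eq_bot_iff K).2 fun x hx => lp.ext (funext fun i => ?_)
  simpa [lp.inner_single_right] using Submodule.inner_right_of_mem_orthogonal hx (h i)

theorem Submodule.eq_bot_or_eq_top_of_starProjection_single {ι 𝕜 : Type*} [RCLike 𝕜]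
    [DecidableEq ι] (K : Submodule 𝕜 ℓ²(ι, 𝕜)) [K.HasOrthogonalProjection] {c : 𝕜}
    (hc : ∀ i, K.starProjection (lp.single 2 i 1) = c • lp.single 2 i 1) : K = ⊥ ∨ K = ⊤ := by
  rcases eq_or_ne c 0 with rfl | hc0
  · left
    exact lp.eq_bot_of_forall_single_mem_orthogonal fun i =>
      K.starProjection_apply_eq_zero_iff.1 (by simp [hc])
  · right
    rw [← K.orthogonal_eq_bot_iff]
    refine lp.eq_bot_of_forall_single_mem_orthogonal fun i => K.le_orthogonal_orthogonal ?_
    have : lp.single 2 i 1 = c⁻¹ • K.starProjection (lp.single 2 i 1) := by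
      rw [hc, smul_smul, inv_mul_cancel₀ hc0, one_smul]
    rw [this]
    exact K.smul_mem _ (K.starProjection_apply_mem _)

theorem LinearIsometryEquiv.map_starProjection_of_mapsTo {𝕜 E : Type*} [RCLike 𝕜]
    [NormedAddCommGroup E] [InnerProductSpace 𝕜 E] (f : E ≃ₗᵢ[𝕜] E) {K : Submodule 𝕜 E}
    [K.HasOrthogonalProjection] (hf : Set.MapsTo f K K) (hf' : Set.MapsTo f.symm K K) (x : E) :
    f (K.starProjection x) = K.starProjection (f x) := by
  refine (K.eq_starProjection_of_mem_orthogonal (hf (K.starProjection_apply_mem x)) ?_).symm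
  rw [← map_sub, Submodule.mem_orthogonal']
  intro u hu
  rw [← f.apply_symm_apply u, f.inner_map_map]
  exact K.inner_left_of_mem_orthogonal (hf' hu) (K.sub_starProjection_mem_orthogonal x)

open FreeGroup

theorem treeGraph_adj {s t : V} :
    treeGraph.Adj s t ↔ s⁻¹ * t ∈ Set.range of ∨ t⁻¹ * s ∈ Set.range of := by
  have hrel : ∀ s t : V, s⁻¹ * t ∈ Set.range of ↔ ∃ i, t = s * of i := fun s t => by
    simp only [Set.mem_range, eq_inv_mul_iff_mul_eq, eq_comm (b := t)]
  rw [treeGraph, SimpleGraph.fromRel_adj, hrel, hrel]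
  refine ⟨And.right, fun h => ⟨?_, h⟩⟩
  rintro rfl
  rcases h with ⟨i, hi⟩ | ⟨i, hi⟩ <;> exact of_ne_one i (mul_eq_left.1 hi.symm)

namespace TreeAut

def mulLeft (a : V) : TreeAut :=
  ⟨Equiv.mulLeft a, by simp [treeGraph_adj, mul_assoc]⟩

@[simp]
theorem mulLeft_apply (a v : V) : mulLeft a v = a * v := rfl

def ofPerm (σ : Equiv.Perm ℕ) : TreeAut :=
  ⟨(freeGroupCongr σ).toEquiv, by
    intro s t
    simp only [treeGraph_adj, MulEquiv.toEquiv_eq_coe, EquivLike.coe_coe, freeGroupCongr_apply]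
    rw [← _root_.map_inv, ← _root_.map_mul, ← _root_.map_inv, ← _root_.map_mul,
      map_mem_range_of_iff, map_mem_range_of_iff]⟩

@[simp]
theorem ofPerm_apply (σ : Equiv.Perm ℕ) (v : V) : ofPerm σ v = map σ v := rfl

end TreeAut

theorem lam_apply (p : ℝ≥0∞) (g : V ≃ V) (x : lpT p) (v : V) : lam p g x v = x (g.symm v) := rfl

theorem lam_single (p : ℝ≥0∞) (g : V ≃ V) (t : V) (a : ℂ) :
    lam p g (lp.single p t a) = lp.single p (g t) a := by
  ext v
  simp [lam_apply, lp.single_apply, Pi.single_apply, Equiv.symm_apply_eq]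

theorem inner_lam_lam (g : V ≃ V) (x y : lpT 2) :
    inner ℂ (lam 2 g x) (lam 2 g y) = inner ℂ x y := by
  simp only [lp.inner_eq_tsum, lam_apply]
  exact g.symm.tsum_eq fun v => inner ℂ (x v) (y v)

def lamIsometry (g : V ≃ V) : lpT 2 ≃ₗᵢ[ℂ] lpT 2 :=
  (LinearEquiv.ofLinearMap (lam 2 g) (lam 2 g.symm)
    (LinearMap.ext fun x => lp.ext (funext fun v => by simp [lam_apply]))
    (LinearMap.ext fun x => lp.ext (funext fun v => by simp [lam_apply]))).isometryOfInner
    (inner_lam_lam g)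

theorem eq_smul_single_of_forall_lam_ofPerm_eq {p : ℝ≥0∞} (hp : 0 < p.toReal) {y : lpT p}
    (hy : ∀ σ, lam p (TreeAut.ofPerm σ).toEquiv y = y) : y = y 1 • lp.single p 1 1 := by
  ext s
  rcases eq_or_ne s 1 with rfl | hs
  · simp
  · have hconst : ∀ v ∈ Set.range fun σ : Equiv.Perm ℕ => map σ s, y v = y s := by
      rintro _ ⟨σ, rfl⟩
      calc y (map σ s) = lam p (TreeAut.ofPerm σ).toEquiv y (map σ s) := by rw [hy σ]
        _ = y s := by
          rw [lam_apply]
          exact congrArg y ((TreeAut.ofPerm σ).toEquiv.symm_apply_apply s)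
    have := (lp.memℓp y).eq_zero_of_forall_eq_on_infinite hp (infinite_range_map_perm hs) hconst
    simp [this, hs]

/-- The unitary representation `λ : Aut(T) → U(ℓ₂(T))` is irreducible: the only closed
`λ(Aut(T))`-invariant subspaces of `ℓ₂(T)` are `{0}` and `ℓ₂(T)`. -/
theorem treeRep_irreducible (W : Submodule ℂ (lpT 2))
    (hclosed : IsClosed (W : Set (lpT 2)))
    (hinv : ∀ g : TreeAut, ∀ x ∈ W, lam 2 g.toEquiv x ∈ W) :
    W = ⊥ ∨ W = ⊤ := by
  have : CompleteSpace W := hclosed.completeSpace_coe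
  have hcomm : ∀ (g : TreeAut) x,
      W.starProjection (lam 2 g.toEquiv x) = lam 2 g.toEquiv (W.starProjection x) := fun g x =>
    ((lamIsometry g.toEquiv).map_starProjection_of_mapsTo (hinv g) (hinv g.symm) x).symm
  set δ : V → lpT 2 := fun t => lp.single 2 t 1
  set c := W.starProjection (δ 1) 1
  have hδ1 : W.starProjection (δ 1) = c • δ 1 :=
    eq_smul_single_of_forall_lam_ofPerm_eq (by norm_num) fun σ => by simp [δ, ← hcomm, lam_single]
  refine W.eq_bot_or_eq_top_of_starProjection_single (c := c) fun t => ?_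
  calc W.starProjection (δ t) = W.starProjection (lam 2 (TreeAut.mulLeft t).toEquiv (δ 1)) := by
        simp [δ, lam_single]
    _ = c • lam 2 (TreeAut.mulLeft t).toEquiv (δ 1) := by rw [hcomm, hδ1, map_smul]
    _ = c • δ t := by simp [δ, lam_single]
end
end

section
/- Let T be the ℵ₀-regular tree, t ∈ T a vertex, G_t = Aut(T, t) its stabiliser in Aut(T), and 1 ≤ p < ∞. Then the representation of G_t on ℓ_p(T \ {t}) by permutation of coordinates has no almost invariant unit vectors: there exist g₁, …, g_k ∈ G_t and ε > 0 such that max_i ‖x − λ(g_i)x‖ > ε‖x‖ for every non-zero x ∈ ℓ_p(T \ {t}). -/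
open scoped ENNReal

noncomputable section

/-!
Identify the branches of `T` at `t` with the elements of `F₂ = FreeGroup Bool`, so
that `F₂ ≤ Aut(T, t)` permutes the branches by left multiplication. For `x ∈ ℓ_p(T \ {t})` the
weights `|x v|^p` define a finite measure on the branches, i.e. on `F₂`. The free group is
paradoxical: for each generator `c`, `F₂` is covered by the words starting with `c⁻¹` together
with `c⁻¹` times the words starting with `c`, while the four sets of words with a given first
letter are disjoint. Hence the total mass is at most the total amount of mass moved by
the two generators, and by convexity of `s ↦ s^p` and Hölder's inequality this amount is
`O(p ‖x‖^{p-1} ‖x - λ(g)x‖)`.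
-/

open FreeGroup

lemma ENNReal.tsum_indicator_preimage_le {X : Type*} (e : X ≃ X) (S : Set X) (y : X → ℝ≥0∞) :
    ∑' x, (e ⁻¹' S).indicator y x ≤ ∑' x, S.indicator y x + ∑' x, (y x - y (e x)) := by
  calc ∑' x, (e ⁻¹' S).indicator y x
      ≤ ∑' x, (S.indicator y (e x) + (y x - y (e x))) := by
        refine ENNReal.tsum_le_tsum fun x => ?_
        by_cases hx : e x ∈ S
        · rw [Set.indicator_of_mem hx, Set.indicator_of_mem (Set.mem_preimage.2 hx), add_comm]
          exact le_tsub_add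
        · simp [Set.indicator_of_notMem hx, Set.indicator_of_notMem (Set.mem_preimage.not.2 hx)]
    _ = ∑' x, S.indicator y x + ∑' x, (y x - y (e x)) := by
        rw [ENNReal.tsum_add, e.tsum_eq (S.indicator y)]

namespace FreeGroup

variable {α β X : Type*} [DecidableEq α] [DecidableEq β]

lemma toWord_freeGroupCongr (e : α ≃ β) (w : FreeGroup α) :
    (freeGroupCongr e w).toWord = w.toWord.map (Prod.map e id) := by
  have hred : IsReduced (w.toWord.map (Prod.map e id)) := by
    simpa [IsReduced, List.isChain_map] using (isReduced_toWord (x := w))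
  conv_lhs => rw [← mk_toWord (x := w)]
  rw [freeGroupCongr_apply, map.mk, toWord_mk]
  exact hred.reduce_eq

omit [DecidableEq α] [DecidableEq β] in
lemma exists_freeGroupCongr_eq_mul_of_iff (e : α ≃ β) (a b : FreeGroup α) :
    (∃ j, freeGroupCongr e b = freeGroupCongr e a * of j) ↔ ∃ i, b = a * of i := by
  constructor
  · rintro ⟨j, h⟩
    exact ⟨e.symm j, (freeGroupCongr e).injective (by simp [h])⟩
  · rintro ⟨i, rfl⟩
    exact ⟨e i, by simp⟩

instance [Countable α] : Countable (FreeGroup α) :=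
  Function.Surjective.countable (f := mk) fun w => ⟨w.toWord, mk_toWord⟩

instance [Nonempty α] : Infinite (FreeGroup α) :=
  Infinite.of_surjective norm norm_surjective

lemma mem_startsWith_or_of_mul_mem_startsWith (c : α) (w : FreeGroup α) :
    w ∈ startsWith (c, false) ∨ of c * w ∈ startsWith (c, true) :=
  or_iff_not_imp_left.2 (startsWith_mk_mul (w := (c, true)) w)

lemma sum_indicator_startsWith_le [Fintype α] (f : FreeGroup α → ℝ≥0∞) (w : FreeGroup α) :
    ∑ ℓ : α × Bool, (startsWith ℓ).indicator f w ≤ f w := by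
  rcases h : w.toWord[0]? with _ | ℓ₀ <;> simp [Set.indicator_apply, startsWith, h]

variable (π : X → FreeGroup α) (y : X → ℝ≥0∞)

lemma tsum_le_tsum_startsWith_add {σ : X ≃ X} {c : α} (hσ : ∀ x, π (σ x) = of c * π x) :
    ∑' x, y x ≤ ∑' x, (π ⁻¹' startsWith (c, false)).indicator y x
      + ∑' x, (π ⁻¹' startsWith (c, true)).indicator y x + ∑' x, (y x - y (σ x)) := by
  have hcover : ∀ x, y x ≤ (π ⁻¹' startsWith (c, false)).indicator y x
      + (σ ⁻¹' (π ⁻¹' startsWith (c, true))).indicator y x := by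
    intro x
    rcases mem_startsWith_or_of_mul_mem_startsWith c (π x) with h | h
    · rw [Set.indicator_of_mem (Set.mem_preimage.2 h)]
      exact le_self_add
    · rw [← hσ] at h
      rw [Set.indicator_of_mem (Set.mem_preimage.2 (Set.mem_preimage.2 h))]
      exact le_add_self
  calc ∑' x, y x ≤ ∑' x, (π ⁻¹' startsWith (c, false)).indicator y x
        + ∑' x, (σ ⁻¹' (π ⁻¹' startsWith (c, true))).indicator y x := by
        rw [← ENNReal.tsum_add]; exact ENNReal.tsum_le_tsum hcover
    _ ≤ _ := by
        rw [add_assoc]; gcongr; exact ENNReal.tsum_indicator_preimage_le _ _ _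

lemma sum_tsum_indicator_startsWith_le [Fintype α] :
    ∑ ℓ : α × Bool, ∑' x, (π ⁻¹' startsWith ℓ).indicator y x ≤ ∑' x, y x := by
  rw [← Summable.tsum_finsetSum fun _ _ => ENNReal.summable]
  exact ENNReal.tsum_le_tsum fun x => sum_indicator_startsWith_le (fun _ => y x) (π x)

theorem card_mul_tsum_le_tsum_add_sum_tsum_tsub [Fintype α] (σ : α → X ≃ X)
    (hσ : ∀ c x, π (σ c x) = of c * π x) :
    Fintype.card α * ∑' x, y x ≤ ∑' x, y x + ∑ c, ∑' x, (y x - y (σ c x)) := by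
  calc Fintype.card α * ∑' x, y x = ∑ c : α, ∑' x, y x := by simp
    _ ≤ ∑ c : α, (∑' x, (π ⁻¹' startsWith (c, false)).indicator y x
          + ∑' x, (π ⁻¹' startsWith (c, true)).indicator y x + ∑' x, (y x - y (σ c x))) :=
        Finset.sum_le_sum fun c _ => tsum_le_tsum_startsWith_add π y (hσ c)
    _ = ∑ ℓ : α × Bool, ∑' x, (π ⁻¹' startsWith ℓ).indicator y x
          + ∑ c, ∑' x, (y x - y (σ c x)) := by
        rw [Finset.sum_add_distrib, Fintype.sum_prod_type]
        simp [add_comm]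
    _ ≤ _ := by gcongr; exact sum_tsum_indicator_startsWith_le π y

end FreeGroup

theorem FreeGroup.tsum_le_sum_tsum_tsub {X : Type*} (π : X → FreeGroup Bool) (y : X → ℝ≥0∞)
    (σ : Bool → X ≃ X) (hσ : ∀ c x, π (σ c x) = of c * π x) (hy : ∑' x, y x ≠ ∞) :
    ∑' x, y x ≤ ∑ c, ∑' x, (y x - y (σ c x)) := by
  have h := card_mul_tsum_le_tsum_add_sum_tsum_tsub π y σ hσ
  rw [Fintype.card_bool, Nat.cast_two, two_mul] at h
  exact ENNReal.le_of_add_le_add_left hy h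

lemma Real.rpow_sub_rpow_le_mul_abs {q r s : ℝ} (hq : 1 ≤ q) (hr : 0 ≤ r) (hs : 0 ≤ s) :
    r ^ q - s ^ q ≤ q * r ^ (q - 1) * |r - s| := by
  rcases le_or_gt r s with hrs | hsr
  · have : r ^ q ≤ s ^ q := Real.rpow_le_rpow hr hrs (by linarith)
    have : 0 ≤ q * r ^ (q - 1) * |r - s| := by positivity
    linarith
  · have hslope := (convexOn_rpow hq).slope_le_of_hasDerivAt hs hr hsr
      (Real.hasDerivAt_rpow_const (Or.inr hq))
    rw [slope_def_field, div_le_iff₀ (sub_pos.2 hsr)] at hslope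
    rwa [abs_of_pos (sub_pos.2 hsr)]

namespace lp

variable {ι : Type*} {E : ι → Type*} [∀ i, NormedAddCommGroup (E i)] {p : ℝ≥0∞}

/-- Hölder's inequality for the exponents `p / (p - 1)` and `p`. -/
lemma summable_and_tsum_norm_rpow_mul_le (hp : 1 ≤ p.toReal) (x w : lp E p) :
    Summable (fun i => ‖x i‖ ^ (p.toReal - 1) * ‖w i‖) ∧
      ∑' i, ‖x i‖ ^ (p.toReal - 1) * ‖w i‖ ≤ ‖x‖ ^ (p.toReal - 1) * ‖w‖ := by
  set q := p.toReal with hq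
  have hq0 : 0 < q := by linarith
  have hw : Summable fun i => ‖w i‖ ^ q := (memℓp_gen_iff hq0).1 (lp.memℓp w)
  rcases hp.eq_or_lt with hq1 | hq1
  · simp only [← hq1, sub_self, Real.rpow_zero, one_mul, Real.rpow_one] at hw ⊢
    refine ⟨hw, le_of_eq ?_⟩
    simp [lp.norm_eq_tsum_rpow hq0, ← hq, ← hq1]
  · have hpq : (q / (q - 1)).HolderConjugate q :=
      ((Real.holderConjugate_iff_eq_conjExponent hq1).2 rfl).symm
    have hpow : ∀ i, (‖x i‖ ^ (q - 1)) ^ (q / (q - 1)) = ‖x i‖ ^ q := fun i => by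
      rw [← Real.rpow_mul (norm_nonneg _)]
      congr 1
      field_simp [(sub_pos.2 hq1).ne']
    have hx : Summable fun i => (‖x i‖ ^ (q - 1)) ^ (q / (q - 1)) := by
      simpa only [hpow] using (memℓp_gen_iff hq0).1 (lp.memℓp x)
    refine (Real.summable_and_inner_le_Lp_mul_Lq_tsum_of_nonneg hpq
      (fun i => by positivity) (fun i => norm_nonneg _) hx hw).imp_right fun h => h.trans_eq ?_
    rw [lp.norm_eq_tsum_rpow hq0 x, lp.norm_eq_tsum_rpow hq0 w, ← hq]
    simp only [hpow]
    rw [← Real.rpow_mul (tsum_nonneg fun i => by positivity)]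
    congr 2
    field_simp

lemma tsum_ofReal_rpow_sub_le (hp : 1 ≤ p.toReal) (x z : lp E p) :
    ∑' i, (ENNReal.ofReal (‖x i‖ ^ p.toReal) - ENNReal.ofReal (‖z i‖ ^ p.toReal))
      ≤ ENNReal.ofReal (p.toReal * ‖x‖ ^ (p.toReal - 1) * ‖x - z‖) := by
  set q := p.toReal
  obtain ⟨hsum, hle⟩ := summable_and_tsum_norm_rpow_mul_le hp x (x - z)
  have hpoint : ∀ i, ‖x i‖ ^ q - ‖z i‖ ^ q ≤ q * (‖x i‖ ^ (q - 1) * ‖(x - z) i‖) := fun i =>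
    calc ‖x i‖ ^ q - ‖z i‖ ^ q ≤ q * ‖x i‖ ^ (q - 1) * |‖x i‖ - ‖z i‖| :=
          Real.rpow_sub_rpow_le_mul_abs hp (norm_nonneg _) (norm_nonneg _)
      _ ≤ q * ‖x i‖ ^ (q - 1) * ‖(x - z) i‖ := by
          gcongr
          rw [lp.coeFn_sub, Pi.sub_apply]
          exact abs_norm_sub_norm_le _ _
      _ = _ := mul_assoc _ _ _
  calc ∑' i, (ENNReal.ofReal (‖x i‖ ^ q) - ENNReal.ofReal (‖z i‖ ^ q))
      ≤ ∑' i, ENNReal.ofReal (q * (‖x i‖ ^ (q - 1) * ‖(x - z) i‖)) := by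
        refine ENNReal.tsum_le_tsum fun i => ?_
        rw [← ENNReal.ofReal_sub _ (by positivity)]
        exact ENNReal.ofReal_le_ofReal (hpoint i)
    _ = ENNReal.ofReal (q * ∑' i, ‖x i‖ ^ (q - 1) * ‖(x - z) i‖) := by
        rw [← ENNReal.ofReal_tsum_of_nonneg (fun i => by positivity) (hsum.mul_left q),
          tsum_mul_left]
    _ ≤ _ := by
        rw [mul_assoc]
        exact ENNReal.ofReal_le_ofReal (mul_le_mul_of_nonneg_left hle (by linarith))

end lp

def translateAut (s : V) : TreeAut where
  toEquiv := Equiv.mulLeft s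
  map_rel_iff' := by simp [treeGraph, SimpleGraph.fromRel_adj, mul_assoc]

def relabelAut (σ : Equiv.Perm ℕ) : TreeAut where
  toEquiv := (freeGroupCongr σ).toEquiv
  map_rel_iff' := by
    intro a b
    simp only [treeGraph, SimpleGraph.fromRel_adj, MulEquiv.toEquiv_eq_coe, EquivLike.coe_coe,
      ne_eq, EmbeddingLike.apply_eq_iff_eq, exists_freeGroupCongr_eq_mul_of_iff]

def relabelAt (t : V) (σ : Equiv.Perm ℕ) : TreeAut :=
  (translateAut t⁻¹).trans ((relabelAut σ).trans (translateAut t))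

lemma relabelAt_apply (t : V) (σ : Equiv.Perm ℕ) (v : V) :
    relabelAt t σ v = t * freeGroupCongr σ (t⁻¹ * v) := rfl

lemma relabelAt_apply_self (t : V) (σ : Equiv.Perm ℕ) : relabelAt t σ t = t := by
  simp [relabelAt_apply]

lemma relabelAt_apply_ne_iff {t v : V} (σ : Equiv.Perm ℕ) : relabelAt t σ v ≠ t ↔ v ≠ t :=
  (relabelAt t σ).injective.ne_iff' (relabelAt_apply_self t σ)

/-- The label of the first edge on the path from `t` to `v` (junk for `v = t`). -/
def branch (t v : V) : ℕ := (t⁻¹ * v).toWord.headI.1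

lemma branch_relabelAt {t v : V} (σ : Equiv.Perm ℕ) (hv : v ≠ t) :
    branch t (relabelAt t σ v) = σ (branch t v) := by
  have hne : (t⁻¹ * v).toWord ≠ [] := by
    simpa [toWord_eq_nil_iff, inv_mul_eq_one, eq_comm] using hv
  rw [branch, branch, relabelAt_apply, inv_mul_cancel_left, toWord_freeGroupCongr]
  obtain ⟨ℓ, L, hL⟩ := List.exists_cons_of_ne_nil hne
  simp [hL]

def freeGroupBoolEquivNat : FreeGroup Bool ≃ ℕ := nonempty_equiv_of_countable.some

/-- The generator `c` of `F₂`, acting on the branches at `t` via `freeGroupBoolEquivNat`. -/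
def freeGen (t : V) (c : Bool) : TreeAut :=
  relabelAt t (freeGroupBoolEquivNat.permCongr (Equiv.mulLeft (of c)))

def branchWord (t v : V) : FreeGroup Bool := freeGroupBoolEquivNat.symm (branch t v)

lemma branchWord_freeGen {t v : V} (c : Bool) (hv : v ≠ t) :
    branchWord t (freeGen t c v) = of c * branchWord t v := by
  simp [branchWord, freeGen, branch_relabelAt _ hv, Equiv.permCongr_apply]

lemma norm_rpow_le_sum_norm_sub_lam (t : V) {p : ℝ≥0∞} (hp : 1 ≤ p.toReal) (x : lpT p)
    (hxt : x t = 0) :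
    ‖x‖ ^ p.toReal ≤
      ∑ c : Bool, p.toReal * ‖x‖ ^ (p.toReal - 1) * ‖x - lam p (freeGen t c).symm.toEquiv x‖ := by
  set q := p.toReal
  have hq0 : 0 < q := by linarith
  let y : {v : V // v ≠ t} → ℝ≥0∞ := fun v => ENNReal.ofReal (‖x v‖ ^ q)
  let σ : Bool → {v : V // v ≠ t} ≃ {v : V // v ≠ t} := fun c =>
    (freeGen t c).toEquiv.subtypeEquiv fun v => (relabelAt_apply_ne_iff _).symm
  have hM : ∑' v, y v = ENNReal.ofReal (‖x‖ ^ q) := by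
    have hsupp : Function.support (fun v => ENNReal.ofReal (‖x v‖ ^ q)) ⊆ {v | v ≠ t} := by
      rintro v hv rfl
      simp [hxt, Real.zero_rpow hq0.ne'] at hv
    rw [lp.norm_rpow_eq_tsum hq0, ENNReal.ofReal_tsum_of_nonneg (fun v => by positivity)
        ((memℓp_gen_iff hq0).1 (lp.memℓp x))]
    exact tsum_subtype_eq_of_support_subset hsupp
  have hD : ∀ c, ∑' v, (y v - y (σ c v))
      ≤ ENNReal.ofReal (q * ‖x‖ ^ (q - 1) * ‖x - lam p (freeGen t c).symm.toEquiv x‖) := fun c =>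
    (ENNReal.tsum_comp_le_tsum_of_injective Subtype.val_injective
      (fun v => ENNReal.ofReal (‖x v‖ ^ q) - ENNReal.ofReal (‖x (freeGen t c v)‖ ^ q))).trans
      (lp.tsum_ofReal_rpow_sub_le hp x (lam p (freeGen t c).symm.toEquiv x))
  have hterm : ∀ c : Bool,
      0 ≤ q * ‖x‖ ^ (q - 1) * ‖x - lam p (freeGen t c).symm.toEquiv x‖ := fun c =>
    mul_nonneg (mul_nonneg hq0.le (Real.rpow_nonneg (lp.norm_nonneg' _) _)) (lp.norm_nonneg' _)
  have hpar := tsum_le_sum_tsum_tsub (fun v : {v : V // v ≠ t} => branchWord t v) y σ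
    (fun c v => branchWord_freeGen c v.2) (hM ▸ ENNReal.ofReal_ne_top)
  rw [hM] at hpar
  rw [← ENNReal.ofReal_le_ofReal_iff (Finset.sum_nonneg fun c _ => hterm c),
    ENNReal.ofReal_sum_of_nonneg fun c _ => hterm c]
  exact hpar.trans (Finset.sum_le_sum fun c _ => hD c)

/-- For a vertex `t` of the `ℵ₀`-regular tree and `1 ≤ p < ∞`, the permutation
representation of the stabiliser `Aut(T, t)` on `ℓ_p(T \ {t})` has no almost invariant
unit vectors: there are `g₁, …, g_k ∈ Aut(T, t)` and `ε > 0` with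
`max_i ‖x − λ(g_i)x‖ > ε ‖x‖` for every non-zero `x ∈ ℓ_p(T \ {t})`. -/
theorem no_almost_invariant_vectors (t : V) (p : ℝ≥0∞) (hp1 : 1 ≤ p) (hp2 : p ≠ ∞) :
    ∃ (k : ℕ) (gs : Fin k → TreeAut) (ε : ℝ), 0 < ε ∧
      (∀ i : Fin k, gs i t = t) ∧
      ∀ x : lpT p, (x : V → ℂ) t = 0 → x ≠ 0 →
        ∃ i : Fin k, ε * ‖x‖ < ‖x - lam p ((gs i).toEquiv) x‖ := by
  have hq : 1 ≤ p.toReal := by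
    simpa using ENNReal.toReal_mono hp2 hp1
  refine ⟨2, ![(freeGen t true).symm, (freeGen t false).symm], 1 / (4 * p.toReal),
    by positivity, ?_, fun x hxt hx0 => ?_⟩
  · simp [Fin.forall_fin_two, RelIso.symm_apply_eq, freeGen, relabelAt_apply_self]
  · have : Fact (1 ≤ p) := ⟨hp1⟩
    by_contra! h
    simp only [Fin.forall_fin_two, Matrix.cons_val_zero, Matrix.cons_val_one] at h
    have hx : 0 < ‖x‖ := norm_pos_iff.2 hx0
    have hbound : ∀ N, N ≤ 1 / (4 * p.toReal) * ‖x‖ →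
        p.toReal * ‖x‖ ^ (p.toReal - 1) * N ≤ ‖x‖ ^ p.toReal / 4 :=
      fun N hN => calc
        p.toReal * ‖x‖ ^ (p.toReal - 1) * N
            ≤ p.toReal * ‖x‖ ^ (p.toReal - 1) * (1 / (4 * p.toReal) * ‖x‖) := by gcongr
        _ = ‖x‖ ^ p.toReal / 4 := by
          rw [Real.rpow_sub_one hx.ne']
          field_simp
    have hsum := norm_rpow_le_sum_norm_sub_lam t hq x hxt
    rw [Fintype.sum_bool] at hsum
    have : 0 < ‖x‖ ^ p.toReal := by positivity
    linarith [hbound _ h.1, hbound _ h.2]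
end
end
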